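/- Assume S_* ≠ ∅ and let x_* = P_{S_*}(x^0) be the projection of x^0 onto S_* (S_* is nonempty, closed and convex). Then every iterate x^k of Algorithm A2 lies in the closed ball centered at (x^0 + x_*)/2 with radius ‖x_* − x^0‖/2, i.e. ‖x^k − (x^0 + x_*)/2‖ ≤ ‖x_* − x^0‖/2 for all k. -/

import Mathlib

/-!
The invariant is `⟪x⁰ - xᵏ, x* - xᵏ⟫ ≤ 0`, i.e. `x* ∈ W_k`. Convexity makes `∇f(xᵏ)` a subgradient,
and every trial point lies in `C`, so `f(x*) ≤ f^lev_k` and hence `x* ∈ H_k`. Thus `x*` lies in the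
convex set `C ∩ W_k ∩ H_k`, onto which `x^{k+1}` is the projection of `x⁰`; the variational
characterisation of that projection gives the invariant at `k + 1`. By Thales' theorem the invariant
says that `xᵏ` lies in the ball with diameter `[x⁰, x*]`.
-/

open Filter Set Topology
open scoped RealInnerProductSpace

theorem ConvexOn.le_sub_of_tendsto_slope {E : Type*} [AddCommGroup E] [Module ℝ E]
    {f : E → ℝ} (hf : ConvexOn ℝ univ f) {u v : E} {L : ℝ}
    (hL : Tendsto (fun t : ℝ => (f (u + t • (v - u)) - f u) / t) (𝓝[>] 0) (𝓝 L)) :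
    L ≤ f v - f u := by
  refine le_of_tendsto hL ?_
  filter_upwards [Ioc_mem_nhdsGT (zero_lt_one' ℝ)] with t ⟨ht₀, ht₁⟩
  have hconv := hf.2 (mem_univ u) (mem_univ v) (sub_nonneg.2 ht₁) ht₀.le (sub_add_cancel 1 t)
  rw [show (1 - t) • u + t • v = u + t • (v - u) by module, smul_eq_mul, smul_eq_mul] at hconv
  rw [div_le_iff₀ ht₀]
  linarith

section InnerProductSpace

variable {H : Type*} [NormedAddCommGroup H] [InnerProductSpace ℝ H]

theorem convex_setOf_inner_sub_le (a b : H) (r : ℝ) : Convex ℝ {y : H | ⟪b, y - a⟫ ≤ r} := by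
  have hset : {y : H | ⟪b, y - a⟫ ≤ r} = {y | ⟪b, y⟫ ≤ r + ⟪b, a⟫} := by
    ext y
    simp only [mem_ofPred_eq, inner_sub_right, sub_le_iff_le_add]
  rw [hset]
  exact convex_halfSpace_le (innerₛₗ ℝ b).isLinear _

theorem real_inner_sub_nonpos_of_forall_norm_sub_le {K : Set H} (hK : Convex ℝ K) {u v : H}
    (hv : v ∈ K) (hmin : ∀ w ∈ K, ‖v - u‖ ≤ ‖w - u‖) : ∀ w ∈ K, ⟪u - v, w - v⟫ ≤ 0 := by
  have : Nonempty K := ⟨⟨v, hv⟩⟩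
  refine (norm_eq_iInf_iff_real_inner_le_zero hK hv).1 (le_antisymm ?_ ?_)
  · exact le_ciInf fun w => by simpa only [norm_sub_rev u] using hmin w w.2
  · exact ciInf_le ⟨0, forall_mem_range.2 fun _ => norm_nonneg _⟩ (⟨v, hv⟩ : K)

/-- Thales' theorem, in inequality form. -/
theorem norm_sub_midpoint_le_of_real_inner_nonpos {a b p : H} (h : ⟪a - p, b - p⟫ ≤ 0) :
    ‖p - (2:ℝ)⁻¹ • (a + b)‖ ≤ ‖b - a‖ / 2 := by
  have hmid : p - (2:ℝ)⁻¹ • (a + b) = -(2:ℝ)⁻¹ • ((a - p) + (b - p)) := by module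
  have hdiam : b - a = (b - p) - (a - p) := by abel
  have hsq : ‖(a - p) + (b - p)‖ ^ 2 ≤ ‖(b - p) - (a - p)‖ ^ 2 := by
    rw [norm_add_sq_real, norm_sub_sq_real (b - p), real_inner_comm (a - p)]
    linarith
  rw [hmid, hdiam, norm_smul, norm_neg, norm_inv, Real.norm_two, inv_mul_eq_div]
  gcongr
  exact (sq_le_sq₀ (norm_nonneg _) (norm_nonneg _)).1 hsq

end InnerProductSpace

theorem stmt_12_general
    {H : Type*} [NormedAddCommGroup H] [InnerProductSpace ℝ H]
    (C : Set H) (hCcv : Convex ℝ C)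
    (f : H → ℝ) (hf : ConvexOn ℝ Set.univ f)
    (gradf : H → H)
    (hgrad : ∀ x d : H,
      Tendsto (fun t : ℝ => (f (x + t • d) - f x) / t) (nhdsWithin 0 (Set.Ioi 0))
        (nhds ⟪gradf x, d⟫))
    (PC : H → H)
    (hPC : ∀ x : H, PC x ∈ C ∧ ∀ z ∈ C, ⟪x - PC x, z - PC x⟫ ≤ 0)
    (θ : ℝ)
    (hθ : θ ∈ Set.Ioo (0:ℝ) 1)
    (x z : ℕ → H) (j : ℕ → ℕ)
    (hx0 : x 0 ∈ C)
    (flev : ℕ → ℝ)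
    (hflev0 : flev 0 = f ((θ ^ j 0) • PC (z 0) + (1 - θ ^ j 0) • x 0))
    (hflevS : ∀ k, flev (k+1) =
        min (flev k) (f ((θ ^ j (k+1)) • PC (z (k+1)) + (1 - θ ^ j (k+1)) • x (k+1))))
    (hstep : ∀ k,
      (x (k+1) ∈ C ∧ ⟪x (k+1) - x k, x 0 - x k⟫ ≤ 0 ∧
        ⟪gradf (x k), x (k+1) - x k⟫ + f (x k) - flev k ≤ 0) ∧
      ∀ y : H, y ∈ C → ⟪y - x k, x 0 - x k⟫ ≤ 0 →
        ⟪gradf (x k), y - x k⟫ + f (x k) - flev k ≤ 0 →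
        ‖x (k+1) - x 0‖ ≤ ‖y - x 0‖)
    (xstar : H) (hxsC : xstar ∈ C) (hxsmin : ∀ y ∈ C, f xstar ≤ f y)
    : ∀ k, ‖x k - (2:ℝ)⁻¹ • (x 0 + xstar)‖ ≤ ‖xstar - x 0‖ / 2 := by
  have hsubgrad (u v : H) : ⟪gradf u, v - u⟫ ≤ f v - f u :=
    hf.le_sub_of_tendsto_slope (hgrad u (v - u))
  have hxC : ∀ k, x k ∈ C
    | 0 => hx0
    | k + 1 => (hstep k).1.1
  have htrial (k : ℕ) : f xstar ≤ f ((θ ^ j k) • PC (z k) + (1 - θ ^ j k) • x k) :=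
    hxsmin _ <| hCcv (hPC (z k)).1 (hxC k) (pow_nonneg hθ.1.le _)
      (sub_nonneg.2 (pow_le_one₀ hθ.1.le hθ.2.le)) (add_sub_cancel _ _)
  have hlev (k : ℕ) : f xstar ≤ flev k := by
    induction k with
    | zero => exact hflev0 ▸ htrial 0
    | succ k ih => exact hflevS k ▸ le_min ih (htrial (k + 1))
  have hobtuse (k : ℕ) : ⟪x 0 - x k, xstar - x k⟫ ≤ 0 := by
    induction k with
    | zero => simp
    | succ k ih =>
      obtain ⟨⟨hnextC, hnextW, hnextH⟩, hnearest⟩ := hstep k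
      let K := C ∩ {y | ⟪x 0 - x k, y - x k⟫ ≤ 0} ∩ {y | ⟪gradf (x k), y - x k⟫ ≤ flev k - f (x k)}
      have hK : Convex ℝ K :=
        (hCcv.inter (convex_setOf_inner_sub_le _ _ _)).inter (convex_setOf_inner_sub_le _ _ _)
      have hmemK (y : H) : y ∈ K ↔ y ∈ C ∧ ⟪y - x k, x 0 - x k⟫ ≤ 0 ∧
          ⟪gradf (x k), y - x k⟫ + f (x k) - flev k ≤ 0 := by
        simp only [K, mem_inter_iff, mem_ofPred_eq, real_inner_comm (x 0 - x k), and_assoc]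
        exact and_congr_right' (and_congr_right' ⟨fun h => by linarith, fun h => by linarith⟩)
      have hxsK : xstar ∈ K := (hmemK xstar).2
        ⟨hxsC, real_inner_comm (x 0 - x k) _ ▸ ih, by linarith [hsubgrad (x k) xstar, hlev k]⟩
      refine real_inner_sub_nonpos_of_forall_norm_sub_le hK ((hmemK _).2 ⟨hnextC, hnextW, hnextH⟩)
        (fun y hy => ?_) xstar hxsK
      obtain ⟨hyC, hyW, hyH⟩ := (hmemK y).1 hy
      exact hnearest y hyC hyW hyH
  exact fun k => norm_sub_midpoint_le_of_real_inner_nonpos (hobtuse k)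

theorem stmt_12
    {H : Type*} [NormedAddCommGroup H] [InnerProductSpace ℝ H] [CompleteSpace H]
    (C : Set H) (hCne : C.Nonempty) (hCcl : IsClosed C) (hCcv : Convex ℝ C)
    (f : H → ℝ) (hf : ConvexOn ℝ Set.univ f)
    (gradf : H → H)
    (hgrad : ∀ x d : H,
      Tendsto (fun t : ℝ => (f (x + t • d) - f x) / t) (nhdsWithin 0 (Set.Ioi 0))
        (nhds ⟪gradf x, d⟫))
    (PC : H → H)
    (hPC : ∀ x : H, PC x ∈ C ∧ ∀ z ∈ C, ⟪x - PC x, z - PC x⟫ ≤ 0)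
    (θ δ βlo βhi : ℝ)
    (hθ : θ ∈ Set.Ioo (0:ℝ) 1) (hδ : δ ∈ Set.Ioo (0:ℝ) 1)
    (hβlo : 0 < βlo) (hββ : βlo ≤ βhi)
    (β : ℕ → ℝ) (hβk : ∀ k, β k ∈ Set.Icc βlo βhi)
    (x z : ℕ → H) (α : ℕ → ℝ) (j : ℕ → ℕ)
    (hx0 : x 0 ∈ C)
    (hz : ∀ k, z k = x k - β k • gradf (x k))
    (hjA : ∀ k, f ((θ ^ j k) • PC (z k) + (1 - θ ^ j k) • x k)
        ≤ f (x k) - δ * θ ^ j k * ⟪gradf (x k), x k - PC (z k)⟫)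
    (hjmin : ∀ k, ∀ i < j k, ¬ (f ((θ ^ i) • PC (z k) + (1 - θ ^ i) • x k)
        ≤ f (x k) - δ * θ ^ i * ⟪gradf (x k), x k - PC (z k)⟫))
    (hα : ∀ k, α k = θ ^ j k)
    (flev : ℕ → ℝ)
    (hflev0 : flev 0 = f ((θ ^ j 0) • PC (z 0) + (1 - θ ^ j 0) • x 0))
    (hflevS : ∀ k, flev (k+1) =
        min (flev k) (f ((θ ^ j (k+1)) • PC (z (k+1)) + (1 - θ ^ j (k+1)) • x (k+1))))
    (hstep : ∀ k,
      (x (k+1) ∈ C ∧ ⟪x (k+1) - x k, x 0 - x k⟫ ≤ 0 ∧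
        ⟪gradf (x k), x (k+1) - x k⟫ + f (x k) - flev k ≤ 0) ∧
      ∀ y : H, y ∈ C → ⟪y - x k, x 0 - x k⟫ ≤ 0 →
        ⟪gradf (x k), y - x k⟫ + f (x k) - flev k ≤ 0 →
        ‖x (k+1) - x 0‖ ≤ ‖y - x 0‖)
    (hS : ∃ xs ∈ C, ∀ y ∈ C, f xs ≤ f y)
    (xstar : H) (hxsC : xstar ∈ C) (hxsmin : ∀ y ∈ C, f xstar ≤ f y)
    (hxsproj : ∀ y : H, y ∈ C → (∀ w ∈ C, f y ≤ f w) → ‖xstar - x 0‖ ≤ ‖y - x 0‖)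
    : ∀ k, ‖x k - (2:ℝ)⁻¹ • (x 0 + xstar)‖ ≤ ‖xstar - x 0‖ / 2 :=
  stmt_12_general C hCcv f hf gradf hgrad PC hPC θ hθ x z j hx0 flev hflev0 hflevS hstep xstar hxsC
    hxsmin
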